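/- arXiv:0801.3166 — 5 statements merged into one kernel-verified Lean document; each statement's English description precedes it below -/
import Mathlib

section
/- Let A be a principal ideal domain, p a nonzero irreducible element of A, and N > r positive integers. Let M = (A/p^N)^d and let M' be a submodule of M containing p^r M. Then there exists a basis (e_1, ..., e_d) of M over A/p^N and integers 0 ≤ n_1 ≤ n_2 ≤ ... ≤ n_d ≤ r such that M' is the submodule generated by the elements p^{n_i} e_i. -/
/-!
Pull `M'` back to a lattice `L ⊆ A^d` containing `p^r A^d`. Then `L` has full rank, so the
Smith normal form gives a basis `b` of `A^d` with `L = ⊕ aᵢ A bᵢ`; every `aᵢ` divides `p^r`,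
hence is associated to some `p^{nᵢ}` with `nᵢ ≤ r`. Sorting the `nᵢ` and reducing `b` modulo
`p^N` gives the required basis of `(A/p^N)^d`.
-/

open Module Submodule

section

variable {A M : Type*} [CommRing A] [AddCommGroup M] [Module A M]

theorem Submodule.finrank_eq_of_smul_mem [IsDomain A] [IsNoetherianRing A]
    [Module.Free A M] [Module.Finite A M] {L : Submodule A M} {c : A} (hc : c ≠ 0)
    (hL : ∀ m : M, c • m ∈ L) : finrank A L = finrank A M := by
  refine le_antisymm L.finrank_le (LinearMap.finrank_le_finrank_of_injective
    (f := (c • LinearMap.id).codRestrict L hL) fun x y hxy => ?_)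
  exact smul_right_injective M hc (congrArg Subtype.val hxy)

theorem Submodule.span_range_smul_le_of_associated {ι : Type*} {a a' : ι → A}
    (h : ∀ i, Associated (a i) (a' i)) (v : ι → M) :
    span A (Set.range fun i => a' i • v i) ≤ span A (Set.range fun i => a i • v i) := by
  rw [span_le]
  rintro _ ⟨i, rfl⟩
  obtain ⟨u, hu⟩ := h i
  show a' i • v i ∈ _
  rw [← hu, mul_comm, mul_smul]
  exact smul_mem _ _ (subset_span ⟨i, rfl⟩)

theorem Submodule.span_range_smul_eq_of_associated {ι : Type*} {a a' : ι → A}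
    (h : ∀ i, Associated (a i) (a' i)) (v : ι → M) :
    span A (Set.range fun i => a i • v i) = span A (Set.range fun i => a' i • v i) :=
  le_antisymm (span_range_smul_le_of_associated (fun i => (h i).symm) v)
    (span_range_smul_le_of_associated h v)

theorem Submodule.smithCoeff_dvd_of_smul_mem {ι : Type*} {L : Submodule A M} {b : Basis ι A M}
    {bL : Basis ι A L} {a : ι → A} (hbL : ∀ i, (bL i : M) = a i • b i) {c : A}
    (hc : ∀ m : M, c • m ∈ L) (i : ι) : a i ∣ c := by
  classical
  have hcoord : b.coord i ∘ₗ L.subtype = a i • bL.coord i := bL.ext fun j => by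
    by_cases hij : j = i
    · subst hij; simp [hbL]
    · simp [hbL, Ne.symm hij]
  refine ⟨bL.coord i ⟨c • b i, hc _⟩, ?_⟩
  simpa using LinearMap.congr_fun hcoord ⟨c • b i, hc _⟩

theorem Submodule.eq_span_range_smul_of_basis {ι : Type*} {L : Submodule A M} {b : Basis ι A M}
    {bL : Basis ι A L} {a : ι → A} (hbL : ∀ i, (bL i : M) = a i • b i) :
    L = span A (Set.range fun i => a i • b i) := by
  conv_lhs => rw [← L.range_subtype, LinearMap.range_eq_map, ← bL.span_eq, map_span,
    ← Set.range_comp]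
  simp only [Function.comp_def, L.subtype_apply, hbL]

theorem Submodule.exists_basis_eq_span_pow_smul [IsDomain A] [IsPrincipalIdealRing A]
    {p : A} (hp : Prime p) {r d : ℕ} (b : Basis (Fin d) A M) (L : Submodule A M)
    (hL : ∀ m : M, p ^ r • m ∈ L) :
    ∃ (b' : Basis (Fin d) A M) (k : Fin d → ℕ), Monotone k ∧ (∀ i, k i ≤ r) ∧
      L = span A (Set.range fun i => p ^ k i • b' i) := by
  have := Module.Free.of_basis b
  have := Module.Finite.of_basis b
  obtain ⟨b', a, bL, hbL⟩ := L.exists_smith_normal_form_of_rank_eq b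
    (finrank_eq_of_smul_mem (pow_ne_zero r hp.ne_zero) hL)
  choose k hk hassoc using fun i => (dvd_prime_pow hp r).mp (smithCoeff_dvd_of_smul_mem hbL hL i)
  let σ := Tuple.sort k
  refine ⟨b'.reindex σ.symm, k ∘ σ, Tuple.monotone_sort k, fun i => hk (σ i), ?_⟩
  rw [eq_span_range_smul_of_basis hbL, span_range_smul_eq_of_associated hassoc]
  simp only [Basis.reindex_apply, Equiv.symm_symm, Function.comp_apply]
  exact congrArg (span A) (EquivLike.range_comp (fun i => p ^ k i • b' i) σ).symm

theorem Submodule.exists_basis_eq_span_algebraMap_pow_smul [IsDomain A] [IsPrincipalIdealRing A]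
    {S : Type*} [CommRing S] [Algebra A S] (hsurj : Function.Surjective (algebraMap A S))
    {p : A} (hp : Prime p) {r d : ℕ} (M' : Submodule S (Fin d → S))
    (hM' : ∀ m : Fin d → S, algebraMap A S (p ^ r) • m ∈ M') :
    ∃ (e : Basis (Fin d) S (Fin d → S)) (n : Fin d → ℕ), Monotone n ∧ (∀ i, n i ≤ r) ∧
      M' = span S (Set.range fun i => algebraMap A S (p ^ n i) • e i) := by
  let φ := (Algebra.linearMap A S).compLeft (Fin d)
  have hφ : Function.Surjective φ := hsurj.comp_left
  obtain ⟨b', k, hk_mono, hk_le, hL⟩ := exists_basis_eq_span_pow_smul hp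
    (Pi.basisFun A (Fin d)) ((M'.restrictScalars A).comap φ) fun m => by
      rw [mem_comap, map_smul, ← algebraMap_smul S]
      exact hM' (φ m)
  let e := ((IsBaseChange.linearMap A S).finitePow (Fin d)).basis b'
  refine ⟨e, k, hk_mono, hk_le, restrictScalars_injective A _ _ ?_⟩
  rw [restrictScalars_span A S hsurj, ← map_comap_eq_of_surjective hφ (M'.restrictScalars A), hL,
    map_span, ← Set.range_comp]
  congr 2
  funext i
  simp only [e, IsBaseChange.basis_apply, Function.comp_apply, map_smul]
  rw [algebraMap_smul]

end

theorem stmt0_general (A : Type*) [CommRing A] [IsDomain A] [IsPrincipalIdealRing A]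
    (p : A) (hp : Irreducible p)
    (N r d : ℕ)
    (M' : Submodule (A ⧸ Ideal.span {p ^ N}) (Fin d → A ⧸ Ideal.span {p ^ N}))
    (hM' : ∀ m : Fin d → A ⧸ Ideal.span {p ^ N},
      (Ideal.Quotient.mk (Ideal.span {p ^ N}) (p ^ r)) • m ∈ M') :
    ∃ (e : Module.Basis (Fin d) (A ⧸ Ideal.span {p ^ N}) (Fin d → A ⧸ Ideal.span {p ^ N}))
      (n : Fin d → ℕ), Monotone n ∧ (∀ i, n i ≤ r) ∧
      M' = Submodule.span (A ⧸ Ideal.span {p ^ N})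
        (Set.range fun i => (Ideal.Quotient.mk (Ideal.span {p ^ N}) (p ^ n i)) • e i) :=
  exists_basis_eq_span_algebraMap_pow_smul Ideal.Quotient.mk_surjective hp.prime M' hM'

/-- Elementary divisors lemma: if `A` is a PID, `p` a nonzero irreducible element,
`r < N`, and `M'` is a submodule of `M = (A/p^N)^d` containing `p^r M`, then there is a
basis `(e_1, ..., e_d)` of `M` and integers `0 ≤ n_1 ≤ ... ≤ n_d ≤ r` such that `M'` is
generated by the elements `p^{n_i} e_i`. -/
theorem stmt0 (A : Type*) [CommRing A] [IsDomain A] [IsPrincipalIdealRing A]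
    (p : A) (hp : Irreducible p) (hp0 : p ≠ 0)
    (N r d : ℕ) (hr : 0 < r) (hrN : r < N)
    (M' : Submodule (A ⧸ Ideal.span {p ^ N}) (Fin d → A ⧸ Ideal.span {p ^ N}))
    (hM' : ∀ m : Fin d → A ⧸ Ideal.span {p ^ N},
      (Ideal.Quotient.mk (Ideal.span {p ^ N}) (p ^ r)) • m ∈ M') :
    ∃ (e : Module.Basis (Fin d) (A ⧸ Ideal.span {p ^ N}) (Fin d → A ⧸ Ideal.span {p ^ N}))
      (n : Fin d → ℕ), Monotone n ∧ (∀ i, n i ≤ r) ∧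
      M' = Submodule.span (A ⧸ Ideal.span {p ^ N})
        (Set.range fun i => (Ideal.Quotient.mk (Ideal.span {p ^ N}) (p ^ n i)) • e i) :=
  stmt0_general A p hp N r d M' hM'
end

section
/- Let A be a principal ideal domain and p a nonzero irreducible element of A, with M' ⊆ M = (A/p^N)^d a submodule containing p^r M (r < N), with associated adapted-basis integers n_1 ≤ ... ≤ n_d. Let (x_1, ..., x_D) be a generating family of M', G the d × D matrix of their components, and Ĝ a lift of G to a matrix over A. Then for every k ≤ d, the sum n_1 + ... + n_k equals the minimal p-adic valuation of a k × k minor of Ĝ. -/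
/-!
Lift the basis `e` to a matrix `E` over `A`. The columns of `Ĝ` and the vectors `p^{n_t} e_t`
span the same submodule modulo `p^N`, so `Ĝ = E diag(p^n) C + p^N H` and
`E diag(p^n) = Ĝ P + p^N K`. Hence `[Ĝ | p^N]` factors as `[E | 1] B` where the rows of `B` are
divisible by `p^{n_1}, …, p^{n_d}, p^N, …, p^N`. Expanding the determinant along the rows of the
product, a `k × k` minor of `[Ĝ | p^N]` is divisible by `p` to the sum of `k` of these exponents
taken at distinct rows, hence by `p^{n_1 + ⋯ + n_k}`, and by one power more if the minor uses a
column of `p^N`, since `n_k < N`.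

If every `k × k` minor of `Ĝ` were divisible by `p^{n_1 + ⋯ + n_k + 1}`, then so would be every
`k × k` minor of `[Ĝ | p^N]`, and expanding `E diag(p^n) = [Ĝ | p^N] [P; K]` would make `p` divide
every `k × k` minor of the first `k` columns of `E`. These minors generate the unit ideal modulo
`p^N`, because `E` is invertible modulo `p^N`, so `p` would be a unit.
-/

open Finset Matrix

namespace Matrix

variable {R : Type*} [CommRing R] {n κ : Type*} [Fintype n] [DecidableEq n] [Fintype κ]

theorem det_mul_eq_sum_prod_mul_det_submatrix (F : Matrix n κ R) (B : Matrix κ n R) :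
    (F * B).det = ∑ ρ : n → κ, (∏ i, F i (ρ i)) * (B.submatrix ρ id).det := by
  have hrows : F * B = fun i => ∑ t, F i t • B t := by
    ext i j
    simp [mul_apply, Finset.sum_apply]
  rw [hrows]
  refine ((detRowAlternating : (n → R) [⋀^n]→ₗ[R] R).toMultilinearMap.map_sum _).trans ?_
  exact sum_congr rfl fun ρ _ => detRowAlternating.toMultilinearMap.map_smul_univ _ _

theorem dvd_det_mul_of_dvd_det_submatrix_right {a : R} (F : Matrix n κ R) (B : Matrix κ n R)
    (h : ∀ ρ : n → κ, Function.Injective ρ → a ∣ (B.submatrix ρ id).det) : a ∣ (F * B).det := by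
  classical
  rw [det_mul_eq_sum_prod_mul_det_submatrix]
  refine dvd_sum fun ρ _ => Dvd.dvd.mul_left ?_ _
  by_cases hρ : Function.Injective ρ
  · exact h ρ hρ
  · obtain ⟨i, j, hij, hne⟩ : ∃ i j, ρ i = ρ j ∧ i ≠ j := by
      simpa [Function.Injective] using hρ
    rw [det_zero_of_row_eq hne (by ext; simp [hij])]
    exact dvd_zero a

theorem dvd_det_mul_of_dvd_det_submatrix_left {a : R} (F : Matrix n κ R) (B : Matrix κ n R)
    (h : ∀ ρ : n → κ, Function.Injective ρ → a ∣ (F.submatrix id ρ).det) : a ∣ (F * B).det := by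
  rw [← det_transpose, transpose_mul]
  exact dvd_det_mul_of_dvd_det_submatrix_right _ _ fun ρ hρ => by
    simpa [← transpose_submatrix] using h ρ hρ

theorem prod_dvd_det_of_forall_dvd {M : Matrix n n R} {c : n → R} (h : ∀ i j, c i ∣ M i j) :
    ∏ i, c i ∣ M.det := by
  choose M' hM' using h
  have : M = of fun i j => c i * of M' i j := by ext i j; exact hM' i j
  rw [this, det_mul_column]
  exact dvd_mul_right _ _

theorem isUnit_of_dvd_det_submatrix_of_mul_eq_one {m : Type*} [Fintype m] {X : Matrix m n R}
    {Y : Matrix n m R} (hYX : Y * X = 1) {a : R}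
    (h : ∀ ρ : n → m, Function.Injective ρ → a ∣ (X.submatrix ρ id).det) : IsUnit a :=
  isUnit_of_dvd_one (by simpa [hYX] using dvd_det_mul_of_dvd_det_submatrix_right Y X h)

end Matrix

namespace Finset

theorem sum_range_card_le_sum_of_monotone {μ : ℕ → ℕ} (hμ : Monotone μ) (S : Finset ℕ) :
    ∑ j ∈ range #S, μ j ≤ ∑ j ∈ S, μ j := by
  induction S using Finset.induction_on_max with
  | empty => simp
  | insert a S hlt ih =>
    have ha : a ∉ S := fun h => (hlt a h).false
    have hcard : #S ≤ a := by simpa using card_le_card fun x hx => mem_range.2 (hlt x hx)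
    rw [card_insert_of_notMem ha, sum_range_succ, sum_insert ha, add_comm (μ a)]
    exact add_le_add ih (hμ hcard)

theorem sum_range_card_le_sum_comp {ι : Type*} {μ : ℕ → ℕ} (hμ : Monotone μ) {s : Finset ι}
    {σ : ι → ℕ} (hσ : Set.InjOn σ s) : ∑ j ∈ range #s, μ j ≤ ∑ i ∈ s, μ (σ i) := by
  classical
  rw [← card_image_of_injOn hσ, ← sum_image hσ]
  exact sum_range_card_le_sum_of_monotone hμ _

theorem sum_range_card_sub_one_add_le_sum_comp {ι : Type*} [DecidableEq ι] {μ : ℕ → ℕ}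
    (hμ : Monotone μ) {s : Finset ι} {σ : ι → ℕ} (hσ : Set.InjOn σ s) {l : ι} (hl : l ∈ s) :
    ∑ j ∈ range (#s - 1), μ j + μ (σ l) ≤ ∑ i ∈ s, μ (σ i) := by
  rw [← add_sum_erase s _ hl, add_comm, ← card_erase_of_mem hl]
  exact add_le_add_right (sum_range_card_le_sum_comp hμ (hσ.mono (erase_subset l s))) _

end Finset

theorem Ideal.Quotient.not_isUnit_mk_of_not_isUnit {A : Type*} [CommRing A] {p : A}
    (hp : ¬IsUnit p) {N : ℕ} (hN : N ≠ 0) :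
    ¬IsUnit (Ideal.Quotient.mk (Ideal.span {p ^ N}) p) := by
  intro h
  have h0 : IsUnit (0 : A ⧸ Ideal.span {p ^ N}) := by
    simpa [← map_pow, Ideal.Quotient.eq_zero_iff_mem, Ideal.mem_span_singleton_self] using h.pow N
  rw [isUnit_zero_iff, Ideal.Quotient.zero_eq_one_iff, Ideal.span_singleton_eq_top,
    isUnit_pow_iff hN] at h0
  exact hp h0

theorem exists_eq_mul_add_smul_of_mem_span {A : Type*} [CommRing A] (a : A) {ι κ ο : Type*}
    [Fintype κ] (V : Matrix ι κ A) (W : Matrix ι ο A)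
    (h : ∀ j, (W.map (Ideal.Quotient.mk (Ideal.span {a})))ᵀ j ∈
      Submodule.span (A ⧸ Ideal.span {a}) (Set.range (V.map (Ideal.Quotient.mk (Ideal.span {a})))ᵀ)) :
    ∃ (C : Matrix κ ο A) (H : Matrix ι ο A), W = V * C + a • H := by
  choose c hc using fun j => (Submodule.mem_span_range_iff_exists_fun _).1 (h j)
  obtain ⟨C, hC⟩ : ∃ C : Matrix κ ο A, ∀ t j, Ideal.Quotient.mk _ (C t j) = c j t :=
    ⟨fun t j => (Ideal.Quotient.mk_surjective (c j t)).choose,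
      fun t j => (Ideal.Quotient.mk_surjective (c j t)).choose_spec⟩
  have hmem : ∀ i j, W i j - (V * C) i j ∈ Ideal.span {a} := by
    intro i j
    have hij := congrFun (hc j) i
    simp only [Finset.sum_apply, Pi.smul_apply, transpose_apply, map_apply, smul_eq_mul] at hij
    rw [← Ideal.Quotient.eq, ← hij, mul_apply, map_sum]
    simp [hC, mul_comm]
  choose H hH using fun i j => Ideal.mem_span_singleton'.1 (hmem i j)
  refine ⟨C, of H, ?_⟩
  ext i j
  simp only [Matrix.add_apply, Matrix.smul_apply, of_apply, smul_eq_mul]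
  linear_combination -(hH i j)

theorem exists_injective_not_dvd_det_submatrix {A : Type*} [CommRing A] {p : A}
    (hp : ¬IsUnit p) {N : ℕ} (hN : N ≠ 0) {m : Type*} [Fintype m] [DecidableEq m]
    {E : Matrix m m A} {P : Matrix m m (A ⧸ Ideal.span {p ^ N})}
    (hPE : P * E.map (Ideal.Quotient.mk _) = 1) {k : Type*} [Fintype k] [DecidableEq k]
    {g : k → m} (hg : Function.Injective g) :
    ∃ f : k → m, Function.Injective f ∧ ¬p ∣ (E.submatrix f g).det := by
  by_contra! h
  refine Ideal.Quotient.not_isUnit_mk_of_not_isUnit hp hN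
    (isUnit_of_dvd_det_submatrix_of_mul_eq_one (X := (E.map (Ideal.Quotient.mk _)).submatrix id g)
      (Y := P.submatrix g id) ?_ fun ρ hρ => ?_)
  · rw [← submatrix_mul _ _ _ _ _ Function.bijective_id, hPE, submatrix_one _ hg]
  · simpa [RingHom.map_det, submatrix_map] using map_dvd (Ideal.Quotient.mk _) (h ρ hρ)

/-- Read through `finSumFinEquiv`, `extendByConst n N` lists the exponents `n_1, …, n_d, N, …, N`
of the rows of the matrix `B` in `exists_fromCols_eq_mul`. -/
def extendByConst {d : ℕ} (n : Fin d → ℕ) (c : ℕ) (j : ℕ) : ℕ :=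
  if h : j < d then n ⟨j, h⟩ else c

section extendByConst

variable {d : ℕ} {n : Fin d → ℕ} {c : ℕ}

theorem extendByConst_mono (hn : Monotone n) (hc : ∀ i, n i ≤ c) :
    Monotone (extendByConst n c) := by
  intro a b hab
  unfold extendByConst
  split_ifs with ha hb hb
  · exact hn (Fin.mk_le_mk.2 hab)
  · exact hc _
  · omega
  · rfl

@[simp]
theorem extendByConst_finSumFinEquiv_inl {d' : ℕ} (t : Fin d) :
    extendByConst n c (finSumFinEquiv (Sum.inl t : Fin d ⊕ Fin d')) = n t := by
  simp [extendByConst]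

@[simp]
theorem extendByConst_finSumFinEquiv_inr {d' : ℕ} (t : Fin d') :
    extendByConst n c (finSumFinEquiv (Sum.inr t : Fin d ⊕ Fin d')) = c := by
  simp [extendByConst]

theorem sum_range_extendByConst {k : ℕ} (hk : k ≤ d) :
    ∑ j ∈ range k, extendByConst n c j = ∑ i : Fin k, n (Fin.castLE hk i) := by
  rw [← Fin.sum_univ_eq_sum_range]
  exact sum_congr rfl fun i _ => dif_pos (i.isLt.trans_le hk)

theorem sum_filter_lt_eq_sum_range_extendByConst {k : ℕ} (hk : k ≤ d) :
    ∑ i ∈ univ.filter (fun i : Fin d => (i : ℕ) < k), n i =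
      ∑ j ∈ range k, extendByConst n c j := by
  have hfilter : univ.filter (fun i : Fin d => (i : ℕ) < k) = univ.map (Fin.castLEEmb hk) := by
    ext i
    simp only [mem_filter, mem_univ, true_and, mem_map, Fin.castLEEmb_apply]
    exact ⟨fun h => ⟨⟨i, h⟩, rfl⟩, by rintro ⟨j, rfl⟩; exact j.isLt⟩
  rw [sum_range_extendByConst hk, hfilter, sum_map]
  rfl

end extendByConst

section Lattice

variable {A : Type*} [CommRing A] (p : A) {d D N : ℕ} {n : Fin d → ℕ}

theorem pow_sum_dvd_det_submatrix {ο : Type*} (B : Matrix (Fin d ⊕ Fin d) ο A)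
    (hB : ∀ t c, p ^ extendByConst n N (finSumFinEquiv t) ∣ B t c) {k : ℕ}
    (ρ : Fin k → Fin d ⊕ Fin d) (τ : Fin k → ο) :
    p ^ ∑ i, extendByConst n N (finSumFinEquiv (ρ i)) ∣ (B.submatrix ρ τ).det := by
  rw [← prod_pow_eq_pow_sum]
  exact prod_dvd_det_of_forall_dvd fun i j => hB _ _

theorem pow_dvd_det_submatrix_mul {ι ο : Type*} (hn : Monotone n) (hnN : ∀ i, n i ≤ N)
    (F : Matrix ι (Fin d ⊕ Fin d) A) (B : Matrix (Fin d ⊕ Fin d) ο A)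
    (hB : ∀ t c, p ^ extendByConst n N (finSumFinEquiv t) ∣ B t c) {k : ℕ}
    (f : Fin k → ι) (τ : Fin k → ο) :
    p ^ ∑ j ∈ range k, extendByConst n N j ∣ ((F * B).submatrix f τ).det := by
  rw [submatrix_mul _ _ _ id _ Function.bijective_id]
  refine dvd_det_mul_of_dvd_det_submatrix_right _ _ fun ρ hρ => ?_
  have hσ : Set.InjOn (fun i => (finSumFinEquiv (ρ i) : ℕ)) (univ : Finset (Fin k)) :=
    (Fin.val_injective.comp (finSumFinEquiv.injective.comp hρ)).injOn
  refine (pow_dvd_pow p ?_).trans (pow_sum_dvd_det_submatrix p B hB ρ τ)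
  simpa using sum_range_card_le_sum_comp (extendByConst_mono hn hnN) hσ

theorem pow_succ_dvd_det_submatrix_mul {ι κ : Type*} (hn : Monotone n) (hnN : ∀ i, n i < N)
    (F : Matrix ι (Fin d ⊕ Fin d) A) (B : Matrix (Fin d ⊕ Fin d) (κ ⊕ Fin d) A)
    (hB : ∀ t c, p ^ extendByConst n N (finSumFinEquiv t) ∣ B t c)
    (hB₀ : ∀ t j, B (.inl t) (.inr j) = 0) {k : ℕ} (hkd : k ≤ d)
    (f : Fin k → ι) (τ : Fin k → κ ⊕ Fin d) {i₀ : Fin k} {j₀ : Fin d} (hτ : τ i₀ = .inr j₀) :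
    p ^ (∑ j ∈ range k, extendByConst n N j + 1) ∣ ((F * B).submatrix f τ).det := by
  rw [submatrix_mul _ _ _ id _ Function.bijective_id]
  refine dvd_det_mul_of_dvd_det_submatrix_right _ _ fun ρ hρ => ?_
  by_cases hright : ∃ l t, ρ l = .inr t
  · obtain ⟨l, t, hl⟩ := hright
    have hσ : Set.InjOn (fun i => (finSumFinEquiv (ρ i) : ℕ)) (univ : Finset (Fin k)) :=
      (Fin.val_injective.comp (finSumFinEquiv.injective.comp hρ)).injOn
    have hsum := sum_range_card_sub_one_add_le_sum_comp
      (extendByConst_mono hn fun i => (hnN i).le) hσ (mem_univ l)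
    obtain ⟨k, rfl⟩ : ∃ k', k = k' + 1 := ⟨k - 1, by have := l.isLt; omega⟩
    have hlast : extendByConst n N k < N := by
      simpa [extendByConst, show k < d by omega] using hnN ⟨k, by omega⟩
    simp only [card_univ, Fintype.card_fin, add_tsub_cancel_right, hl,
      extendByConst_finSumFinEquiv_inr] at hsum
    refine (pow_dvd_pow p ?_).trans (pow_sum_dvd_det_submatrix p B hB ρ τ)
    rw [sum_range_succ]
    omega
  · push Not at hright
    rw [det_eq_zero_of_column_eq_zero i₀ fun l => ?_]
    · exact dvd_zero _
    rcases h : ρ l with t | t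
    · simp [h, hτ, hB₀]
    · exact absurd h (hright l t)

variable {E : Matrix (Fin d) (Fin d) A} {C G H : Matrix (Fin d) (Fin D) A}

theorem exists_fromCols_eq_mul (hG : G = E * diagonal (fun t => p ^ n t) * C + p ^ N • H) :
    ∃ (F : Matrix (Fin d) (Fin d ⊕ Fin d) A) (B : Matrix (Fin d ⊕ Fin d) (Fin D ⊕ Fin d) A),
      fromCols G (p ^ N • 1) = F * B ∧
      (∀ t c, p ^ extendByConst n N (finSumFinEquiv t) ∣ B t c) ∧
      ∀ t j, B (.inl t) (.inr j) = 0 := by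
  refine ⟨fromCols E 1, fromBlocks (diagonal (fun t => p ^ n t) * C) 0 (p ^ N • H) (p ^ N • 1),
    ?_, ?_, fun _ _ => rfl⟩
  · rw [fromCols_mul_fromBlocks, hG]
    simp [Matrix.mul_assoc]
  · rintro (t | t) (c | c)
    all_goals
      simp only [extendByConst_finSumFinEquiv_inl, extendByConst_finSumFinEquiv_inr]
      simp [diagonal_mul]

theorem pow_dvd_det_submatrix (hn : Monotone n) (hnN : ∀ i, n i ≤ N)
    (hG : G = E * diagonal (fun t => p ^ n t) * C + p ^ N • H) {k : ℕ}
    (f : Fin k → Fin d) (g : Fin k → Fin D) :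
    p ^ ∑ j ∈ range k, extendByConst n N j ∣ (G.submatrix f g).det := by
  obtain ⟨F, B, hFB, hB, -⟩ := exists_fromCols_eq_mul p hG
  have := pow_dvd_det_submatrix_mul p hn hnN F B hB f (Sum.inl ∘ g)
  rwa [← hFB] at this

theorem pow_succ_dvd_det_submatrix_fromCols (hn : Monotone n) (hnN : ∀ i, n i < N)
    (hG : G = E * diagonal (fun t => p ^ n t) * C + p ^ N • H) {k : ℕ} (hkd : k ≤ d)
    (hminor : ∀ (f : Fin k ↪ Fin d) (g : Fin k ↪ Fin D),
      p ^ (∑ j ∈ range k, extendByConst n N j + 1) ∣ (G.submatrix f g).det)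
    (f : Fin k ↪ Fin d) {τ : Fin k → Fin D ⊕ Fin d} (hτ : Function.Injective τ) :
    p ^ (∑ j ∈ range k, extendByConst n N j + 1) ∣
      ((fromCols G (p ^ N • 1)).submatrix f τ).det := by
  by_cases hright : ∃ i j, τ i = .inr j
  · obtain ⟨i, j, hij⟩ := hright
    obtain ⟨F, B, hFB, hB, hB₀⟩ := exists_fromCols_eq_mul p hG
    rw [hFB]
    exact pow_succ_dvd_det_submatrix_mul p hn hnN F B hB hB₀ hkd f τ hij
  · push Not at hright
    have hleft : ∀ i, ∃ g, τ i = .inl g := fun i => by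
      rcases h : τ i with g | j
      · exact ⟨g, rfl⟩
      · exact absurd h (hright i j)
    choose g hg using hleft
    obtain rfl : τ = Sum.inl ∘ g := funext hg
    exact hminor f ⟨g, hτ.of_comp⟩

theorem det_submatrix_mul_diagonal_castLE {k : ℕ} (hkd : k ≤ d) (f : Fin k → Fin d) :
    ((E * diagonal fun t => p ^ n t).submatrix f (Fin.castLE hkd)).det =
      p ^ (∑ j ∈ range k, extendByConst n N j) * (E.submatrix f (Fin.castLE hkd)).det := by
  have : (E * diagonal fun t => p ^ n t).submatrix f (Fin.castLE hkd) =
      E.submatrix f (Fin.castLE hkd) * diagonal fun i => p ^ n (Fin.castLE hkd i) := by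
    ext i j
    simp [mul_diagonal]
  rw [this, det_mul, det_diagonal, prod_pow_eq_pow_sum, sum_range_extendByConst hkd, mul_comm]

theorem dvd_det_submatrix_castLE [IsDomain A] (hp : p ≠ 0) (hn : Monotone n)
    (hnN : ∀ i, n i < N) (hG : G = E * diagonal (fun t => p ^ n t) * C + p ^ N • H)
    {P : Matrix (Fin D) (Fin d) A} {K : Matrix (Fin d) (Fin d) A}
    (hE : E * diagonal (fun t => p ^ n t) = G * P + p ^ N • K) {k : ℕ} (hkd : k ≤ d)
    (hminor : ∀ (f : Fin k ↪ Fin d) (g : Fin k ↪ Fin D),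
      p ^ (∑ j ∈ range k, extendByConst n N j + 1) ∣ (G.submatrix f g).det)
    (f : Fin k ↪ Fin d) : p ∣ (E.submatrix f (Fin.castLE hkd)).det := by
  have hfactor : E * diagonal (fun t => p ^ n t) =
      fromCols G (p ^ N • (1 : Matrix (Fin d) (Fin d) A)) * fromRows P K := by
    rw [fromCols_mul_fromRows, hE, Matrix.smul_mul, Matrix.one_mul]
  have hdvd : p ^ (∑ j ∈ range k, extendByConst n N j + 1) ∣
      p ^ (∑ j ∈ range k, extendByConst n N j) * (E.submatrix f (Fin.castLE hkd)).det := by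
    rw [← det_submatrix_mul_diagonal_castLE p hkd f, hfactor,
      submatrix_mul _ _ _ id _ Function.bijective_id]
    exact dvd_det_mul_of_dvd_det_submatrix_left _ _ fun ρ hρ =>
      pow_succ_dvd_det_submatrix_fromCols p hn hnN hG hkd hminor f hρ
  rwa [pow_succ, mul_dvd_mul_iff_left (pow_ne_zero _ hp)] at hdvd

end Lattice

theorem stmt2_general (A : Type*) [CommRing A] [IsDomain A]
    (p : A) (hp : Irreducible p)
    (N r d D : ℕ) (hrN : r < N)
    (M' : Submodule (A ⧸ Ideal.span {p ^ N}) (Fin d → A ⧸ Ideal.span {p ^ N}))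
    (e : Module.Basis (Fin d) (A ⧸ Ideal.span {p ^ N}) (Fin d → A ⧸ Ideal.span {p ^ N}))
    (n : Fin d → ℕ) (hmono : Monotone n) (hnr : ∀ i, n i ≤ r)
    (hgen : M' = Submodule.span (A ⧸ Ideal.span {p ^ N})
      (Set.range fun i => (Ideal.Quotient.mk (Ideal.span {p ^ N}) (p ^ n i)) • e i))
    (x : Fin D → (Fin d → A ⧸ Ideal.span {p ^ N}))
    (hx : Submodule.span (A ⧸ Ideal.span {p ^ N}) (Set.range x) = M')
    (Ghat : Matrix (Fin d) (Fin D) A)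
    (hlift : ∀ i j, Ideal.Quotient.mk (Ideal.span {p ^ N}) (Ghat i j) = x j i) :
    ∀ k : ℕ, 1 ≤ k → k ≤ d →
      (∀ (f : Fin k ↪ Fin d) (g : Fin k ↪ Fin D),
        p ^ (∑ i ∈ Finset.univ.filter fun i : Fin d => (i : ℕ) < k, n i) ∣
          (Ghat.submatrix f g).det) ∧
      (∃ (f : Fin k ↪ Fin d) (g : Fin k ↪ Fin D),
        ¬ p ^ ((∑ i ∈ Finset.univ.filter fun i : Fin d => (i : ℕ) < k, n i) + 1) ∣
          (Ghat.submatrix f g).det) := by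
  classical
  set Q := Ideal.Quotient.mk (Ideal.span {p ^ N})
  have hnN : ∀ i, n i < N := fun i => (hnr i).trans_lt hrN
  obtain ⟨E, hE⟩ : ∃ E : Matrix (Fin d) (Fin d) A, ∀ i t, Q (E i t) = e t i :=
    ⟨fun i t => (Ideal.Quotient.mk_surjective (e t i)).choose,
      fun i t => (Ideal.Quotient.mk_surjective (e t i)).choose_spec⟩
  have hPE : e.toMatrix (Pi.basisFun _ _) * E.map Q = 1 := by
    convert e.toMatrix_mul_toMatrix_flip (Pi.basisFun _ (Fin d))
    ext i t
    simp [Module.Basis.toMatrix_apply, hE]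
  have hV : ((E * diagonal fun t => p ^ n t).map Q)ᵀ = fun t => Q (p ^ n t) • e t := by
    ext t i
    simp [hE, mul_comm]
  have hGhat : (Ghat.map Q)ᵀ = x := by ext j i; exact hlift i j
  obtain ⟨C, H, hG⟩ := exists_eq_mul_add_smul_of_mem_span (p ^ N) (E * diagonal _) Ghat
    fun j => by rw [hV, hGhat, ← hgen, ← hx]; exact Submodule.subset_span ⟨j, rfl⟩
  obtain ⟨P, K, hEG⟩ := exists_eq_mul_add_smul_of_mem_span (p ^ N) Ghat (E * diagonal _)
    fun t => by rw [hV, hGhat, hx, hgen]; exact Submodule.subset_span ⟨t, rfl⟩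
  intro k _ hkd
  rw [sum_filter_lt_eq_sum_range_extendByConst (c := N) hkd]
  refine ⟨fun f g => pow_dvd_det_submatrix p hmono (fun i => (hnN i).le) hG f g, ?_⟩
  by_contra! hminor
  obtain ⟨f, hf, hndvd⟩ := exists_injective_not_dvd_det_submatrix hp.not_isUnit (by omega)
    hPE (Fin.castLE_injective hkd)
  exact hndvd (dvd_det_submatrix_castLE p hp.ne_zero hmono hnN hG hEG hkd hminor ⟨f, hf⟩)

/-- In the setting of the elementary divisors lemma, with adapted-basis integers
`n_1 ≤ ... ≤ n_d`: if `(x_1, ..., x_D)` generates `M'`, `G` is the `d × D` matrix of their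
components and `Ĝ` lifts `G` to `A`, then for every `1 ≤ k ≤ d` the sum `n_1 + ... + n_k`
is the minimal `p`-adic valuation of a `k × k` minor of `Ĝ`: `p^{n_1+...+n_k}` divides every
`k × k` minor, and some `k × k` minor is not divisible by `p^{n_1+...+n_k+1}`. -/
theorem stmt2 (A : Type*) [CommRing A] [IsDomain A] [IsPrincipalIdealRing A]
    (p : A) (hp : Irreducible p) (hp0 : p ≠ 0)
    (N r d D : ℕ) (hr : 0 < r) (hrN : r < N)
    (M' : Submodule (A ⧸ Ideal.span {p ^ N}) (Fin d → A ⧸ Ideal.span {p ^ N}))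
    (hM' : ∀ m : Fin d → A ⧸ Ideal.span {p ^ N},
      (Ideal.Quotient.mk (Ideal.span {p ^ N}) (p ^ r)) • m ∈ M')
    (e : Module.Basis (Fin d) (A ⧸ Ideal.span {p ^ N}) (Fin d → A ⧸ Ideal.span {p ^ N}))
    (n : Fin d → ℕ) (hmono : Monotone n) (hnr : ∀ i, n i ≤ r)
    (hgen : M' = Submodule.span (A ⧸ Ideal.span {p ^ N})
      (Set.range fun i => (Ideal.Quotient.mk (Ideal.span {p ^ N}) (p ^ n i)) • e i))
    (x : Fin D → (Fin d → A ⧸ Ideal.span {p ^ N}))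
    (hx : Submodule.span (A ⧸ Ideal.span {p ^ N}) (Set.range x) = M')
    (Ghat : Matrix (Fin d) (Fin D) A)
    (hlift : ∀ i j, Ideal.Quotient.mk (Ideal.span {p ^ N}) (Ghat i j) = x j i) :
    ∀ k : ℕ, 1 ≤ k → k ≤ d →
      (∀ (f : Fin k ↪ Fin d) (g : Fin k ↪ Fin D),
        p ^ (∑ i ∈ Finset.univ.filter fun i : Fin d => (i : ℕ) < k, n i) ∣
          (Ghat.submatrix f g).det) ∧
      (∃ (f : Fin k ↪ Fin d) (g : Fin k ↪ Fin D),
        ¬ p ^ ((∑ i ∈ Finset.univ.filter fun i : Fin d => (i : ℕ) < k, n i) + 1) ∣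
          (Ghat.submatrix f g).det) :=
  stmt2_general A p hp N r d D hrN M' e n hmono hnr hgen x hx Ghat hlift
end

section
/- Let a'_1 ≤ ... ≤ a'_{d'}, a''_1 ≤ ... ≤ a''_{d''}, b'_1 ≤ ... ≤ b'_{d'}, b''_1 ≤ ... ≤ b''_{d''} be real numbers. Suppose that for all m ≤ d', a'_1 + ... + a'_m ≤ b'_1 + ... + b'_m with equality for m = d', and similarly for the double-primed sequences. Then for every k ≤ d' + d'', the sum of the k smallest elements of the multiset {a'_i} ∪ {a''_j} is at most the sum of the k smallest elements of the multiset {b'_i} ∪ {b''_j}, with equality when k = d' + d''. -/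
/-!
Write `S(s, k)` for the sum of the `k` smallest elements of a multiset `s`; it is the least sum
of a size-`k` submultiset of `s`. Realise `S(b' + b'', k)` by a submultiset and split it into
`i` elements of `b'` and `j = k - i` elements of `b''`. Then
`S(a' + a'', k) ≤ S(a', i) + S(a'', j) ≤ S(b', i) + S(b'', j) ≤ S(b' + b'', k)`.
At `k = d' + d''` both sides are the total sums, which agree.
-/

open Finset

namespace List

variable {α : Type*} [AddCommMonoid α] [PartialOrder α] [IsOrderedAddMonoid α]

theorem sum_take_cons_le_sum_take {a : α} {l : List α} (ha : ∀ b ∈ l, a ≤ b) {n : ℕ}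
    (hn : n ≤ l.length) : ((a :: l).take n).sum ≤ (l.take n).sum := by
  cases n with
  | zero => simp
  | succ n =>
    rw [take_succ_cons, sum_cons, sum_take_succ l n hn, add_comm]
    exact add_le_add_right (ha _ (getElem_mem _)) _

theorem Pairwise.sum_take_length_le_of_sublist {l l' : List α} (hl : l.Pairwise (· ≤ ·))
    (h : l' <+ l) : (l.take l'.length).sum ≤ l'.sum := by
  induction h with
  | slnil => simp
  | cons a h ih =>
    rw [pairwise_cons] at hl
    exact (sum_take_cons_le_sum_take hl.1 h.length_le).trans (ih hl.2)
  | cons_cons a _ ih =>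
    rw [length_cons, take_succ_cons, sum_cons, sum_cons]
    exact add_le_add_right (ih hl.of_cons) a

end List

namespace Multiset

theorem exists_le_le_add_eq_of_le_add {β : Type*} [DecidableEq β] {u s t : Multiset β}
    (h : u ≤ s + t) :
    ∃ u₁ ≤ s, ∃ u₂ ≤ t, u₁ + u₂ = u :=
  ⟨u ∩ s, inter_le_right, u - s, tsub_le_iff_left.mpr h, by rw [add_comm, sub_add_inter]⟩

variable {α : Type*} [AddCommMonoid α] [LinearOrder α]

def sumSmallest (s : Multiset α) (k : ℕ) : α :=
  ((s.sort (· ≤ ·)).take k).sum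

theorem sumSmallest_of_card_le {s : Multiset α} {k : ℕ} (hk : card s ≤ k) :
    s.sumSmallest k = s.sum := by
  rw [sumSmallest, List.take_of_length_le (by rwa [length_sort]), ← sum_coe, sort_eq]

theorem exists_le_card_eq_sum_eq_sumSmallest {s : Multiset α} {k : ℕ} (hk : k ≤ card s) :
    ∃ u ≤ s, card u = k ∧ u.sum = s.sumSmallest k := by
  refine ⟨(s.sort (· ≤ ·)).take k, ?_, ?_, sum_coe _⟩
  · calc ((s.sort (· ≤ ·)).take k : Multiset α) ≤ s.sort (· ≤ ·) :=
          coe_le.mpr (List.take_sublist _ _).subperm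
      _ = s := sort_eq _ _
  · rw [coe_card, List.length_take, length_sort, min_eq_left hk]

theorem sumSmallest_map_univ_of_monotone {d : ℕ} {f : Fin d → α} (hf : Monotone f) (m : ℕ) :
    (univ.val.map f).sumSmallest m = ∑ i ∈ univ.filter fun i : Fin d => (i : ℕ) < m, f i := by
  have hsort : (univ.val.map f).sort (· ≤ ·) = List.ofFn f := by
    refine List.Perm.eq_of_pairwise' (pairwise_sort _ _)
      (List.sortedLE_ofFn_iff.mpr hf).pairwise ?_
    rw [← coe_eq_coe, sort_eq, List.ofFn_eq_map, Fin.univ_def]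
    simp [map_coe]
  rw [sumSmallest, hsort, List.sum_take_ofFn]

section

variable [IsOrderedAddMonoid α]

theorem sumSmallest_card_le_sum {s u : Multiset α} (h : u ≤ s) :
    s.sumSmallest (card u) ≤ u.sum := by
  have hsub : (u.sort (· ≤ ·)).Sublist (s.sort (· ≤ ·)) :=
    List.sublist_of_subperm_of_pairwise (by rwa [← coe_le, sort_eq, sort_eq])
      (pairwise_sort u _) (pairwise_sort s _)
  have := (pairwise_sort s _).sum_take_length_le_of_sublist hsub
  rwa [length_sort, ← sum_coe (u.sort _), sort_eq] at this

theorem sumSmallest_add_le {s t : Multiset α} {i j : ℕ} (hi : i ≤ card s) (hj : j ≤ card t) :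
    (s + t).sumSmallest (i + j) ≤ s.sumSmallest i + t.sumSmallest j := by
  obtain ⟨u, hus, rfl, hu⟩ := exists_le_card_eq_sum_eq_sumSmallest hi
  obtain ⟨v, hvt, rfl, hv⟩ := exists_le_card_eq_sum_eq_sumSmallest hj
  rw [← hu, ← hv, ← sum_add, ← card_add]
  exact sumSmallest_card_le_sum (add_le_add hus hvt)

theorem sumSmallest_add_le_sumSmallest_add {s t s' t' : Multiset α}
    (hs : card s' ≤ card s) (ht : card t' ≤ card t)
    (hss' : ∀ i ≤ card s', s.sumSmallest i ≤ s'.sumSmallest i)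
    (htt' : ∀ j ≤ card t', t.sumSmallest j ≤ t'.sumSmallest j)
    {k : ℕ} (hk : k ≤ card (s' + t')) :
    (s + t).sumSmallest k ≤ (s' + t').sumSmallest k := by
  classical
  obtain ⟨u, hu, rfl, hu_sum⟩ := exists_le_card_eq_sum_eq_sumSmallest hk
  obtain ⟨u₁, hu₁, u₂, hu₂, rfl⟩ := exists_le_le_add_eq_of_le_add hu
  have hi := card_le_card hu₁
  have hj := card_le_card hu₂
  calc (s + t).sumSmallest (card (u₁ + u₂))
      ≤ s.sumSmallest (card u₁) + t.sumSmallest (card u₂) := by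
        rw [card_add]; exact sumSmallest_add_le (hi.trans hs) (hj.trans ht)
    _ ≤ s'.sumSmallest (card u₁) + t'.sumSmallest (card u₂) :=
        add_le_add (hss' _ hi) (htt' _ hj)
    _ ≤ u₁.sum + u₂.sum :=
        add_le_add (sumSmallest_card_le_sum hu₁) (sumSmallest_card_le_sum hu₂)
    _ = (s' + t').sumSmallest (card (u₁ + u₂)) := by rw [← sum_add, hu_sum]

end

end Multiset

open Multiset

/-- Merging lemma for polygons: if the polygon of `a'` is below that of `b'` with the same
endpoint, and similarly for `a''`, `b''`, then the polygon of the merged multiset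
`{a'} ∪ {a''}` is below that of `{b'} ∪ {b''}` with the same endpoint. Partial sums of the
`k` smallest elements are compared via sorted lists. -/
theorem stmt3 (d' d'' : ℕ) (a' b' : Fin d' → ℝ) (a'' b'' : Fin d'' → ℝ)
    (ha' : Monotone a') (hb' : Monotone b') (ha'' : Monotone a'') (hb'' : Monotone b'')
    (hle' : ∀ m : ℕ, m ≤ d' →
      (∑ i ∈ Finset.univ.filter fun i : Fin d' => (i : ℕ) < m, a' i) ≤
      (∑ i ∈ Finset.univ.filter fun i : Fin d' => (i : ℕ) < m, b' i))
    (heq' : ∑ i, a' i = ∑ i, b' i)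
    (hle'' : ∀ m : ℕ, m ≤ d'' →
      (∑ i ∈ Finset.univ.filter fun i : Fin d'' => (i : ℕ) < m, a'' i) ≤
      (∑ i ∈ Finset.univ.filter fun i : Fin d'' => (i : ℕ) < m, b'' i))
    (heq'' : ∑ i, a'' i = ∑ i, b'' i) :
    (∀ k : ℕ, k ≤ d' + d'' →
      ((((Multiset.map a' Finset.univ.val) + (Multiset.map a'' Finset.univ.val)).sort
          (· ≤ ·)).take k).sum ≤
      ((((Multiset.map b' Finset.univ.val) + (Multiset.map b'' Finset.univ.val)).sort
          (· ≤ ·)).take k).sum) ∧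
    ((((Multiset.map a' Finset.univ.val) + (Multiset.map a'' Finset.univ.val)).sort
        (· ≤ ·)).take (d' + d'')).sum =
    ((((Multiset.map b' Finset.univ.val) + (Multiset.map b'' Finset.univ.val)).sort
        (· ≤ ·)).take (d' + d'')).sum := by
  refine ⟨fun k hk => ?_, ?_⟩
  · refine sumSmallest_add_le_sumSmallest_add (by simp) (by simp) (fun i hi => ?_)
      (fun j hj => ?_) (by simpa using hk)
    · rw [sumSmallest_map_univ_of_monotone ha', sumSmallest_map_univ_of_monotone hb']
      exact hle' i (by simpa using hi)
    · rw [sumSmallest_map_univ_of_monotone ha'', sumSmallest_map_univ_of_monotone hb'']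
      exact hle'' j (by simpa using hj)
  · change sumSmallest _ _ = sumSmallest _ _
    rw [sumSmallest_of_card_le (by simp), sumSmallest_of_card_le (by simp), sum_add, sum_add]
    exact congrArg₂ (· + ·) heq' heq''
end

section
/- With the strict compatibility assumption of the previous statement, for every element s ∈ S₁ (acting by multiplication), the natural maps s·N'/(s·N' ∩ Fil N') → s·N/(s·N ∩ Fil N) → s·N''/(s·N'' ∩ Fil N'') are respectively injective and surjective; consequently, when these are finite-dimensional vector spaces over a field k, dim_k(s·N/(s·N ∩ Fil N)) ≥ dim_k(s·N'/(s·N' ∩ Fil N')) + dim_k(s·N''/(s·N'' ∩ Fil N'')). -/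
open Module Submodule

/-!
Since `Fil' = f⁻¹ Fil`, the map `M'/Fil' → M/Fil` induced by `f` is injective. Passing to the
quotient commutes with multiplication by `s`, so the image of `s·M` in `M/Fil` maps onto the image
of `s·M''` (as `g` is surjective), and it contains the image of `s·M'`. The composite of the two
induced maps vanishes, so the image of `s·M'` embeds into the kernel of `M/Fil → M''/Fil''`
restricted to the image of `s·M`, and rank–nullity for this restriction gives the inequality.
-/

section Finrank

variable {k U V W : Type*} [Field k] [AddCommGroup U] [AddCommGroup V] [AddCommGroup W]
  [Module k U] [Module k V] [Module k W]

theorem LinearMap.finrank_add_finrank_range_le_of_comp_eq_zero [FiniteDimensional k V]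
    (φ : U →ₗ[k] V) (ρ : V →ₗ[k] W) (hφ : Function.Injective φ) (hρφ : ρ ∘ₗ φ = 0) :
    finrank k U + finrank k (LinearMap.range ρ) ≤ finrank k V := by
  have hker : finrank k U ≤ finrank k (LinearMap.ker ρ) := by
    rw [← LinearMap.finrank_range_of_inj hφ]
    exact Submodule.finrank_mono (LinearMap.range_le_ker_iff.mpr hρφ)
  have := ρ.finrank_range_add_finrank_ker
  omega

theorem Submodule.finrank_add_finrank_le_of_map_le (φ : U →ₗ[k] V) (ψ : V →ₗ[k] W)
    (hφ : Function.Injective φ) (hψφ : ψ ∘ₗ φ = 0) {A' : Submodule k U} {A : Submodule k V}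
    {A'' : Submodule k W} [FiniteDimensional k A] (hA' : A'.map φ ≤ A) (hA'' : A'' ≤ A.map ψ) :
    finrank k A' + finrank k A'' ≤ finrank k A := by
  have hrestrict : Function.Injective (φ.restrict (map_le_iff_le_comap.mp hA')) :=
    (LinearMap.injective_restrict_iff _).mpr (by simp [LinearMap.ker_eq_bot.mpr hφ])
  have := LinearMap.finrank_add_finrank_range_le_of_comp_eq_zero _ (ψ.domRestrict A) hrestrict
    (by ext x; exact congr($hψφ x))
  rw [LinearMap.range_domRestrict] at this
  have := Submodule.finrank_mono hA''
  omega

end Finrank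

section Quotient

variable {R M N : Type*} [CommRing R] [AddCommGroup M] [AddCommGroup N] [Module R M] [Module R N]

theorem Submodule.mapQ_injective_of_eq_comap {p : Submodule R M} {q : Submodule R N}
    (f : M →ₗ[R] N) (h : p = q.comap f) : Function.Injective (p.mapQ q f h.le) := by
  rw [← LinearMap.ker_eq_bot, ker_mapQ, ← h, mkQ_map_self]

theorem Submodule.map_mapQ_map_mkQ {p : Submodule R M} {q : Submodule R N} (f : M →ₗ[R] N)
    (h : p ≤ q.comap f) (P : Submodule R M) :
    (P.map p.mkQ).map (p.mapQ q f h) = (P.map f).map q.mkQ := by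
  rw [← map_comp, mapQ_mkQ, map_comp]

theorem Submodule.map_map_lsmul_top (f : M →ₗ[R] N) (s : R) :
    (map (LinearMap.lsmul R M s) ⊤).map f = (LinearMap.range f).map (LinearMap.lsmul R N s) := by
  rw [← map_comp, show f ∘ₗ LinearMap.lsmul R M s = LinearMap.lsmul R N s ∘ₗ f from
    LinearMap.ext (f.map_smul s), map_comp, map_top]

end Quotient

theorem stmt15_general (k S₁ : Type*) [Field k] [CommRing S₁] [Algebra k S₁]
    (M' M M'' : Type*)
    [AddCommGroup M'] [AddCommGroup M] [AddCommGroup M'']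
    [Module S₁ M'] [Module S₁ M] [Module S₁ M'']
    [Module k M'] [Module k M] [Module k M'']
    [IsScalarTower k S₁ M'] [IsScalarTower k S₁ M] [IsScalarTower k S₁ M'']
    (f : M' →ₗ[S₁] M) (g : M →ₗ[S₁] M'')
    (hg : Function.Surjective g)
    (hfg : Function.Exact f g)
    (Fil' : Submodule S₁ M') (Fil : Submodule S₁ M) (Fil'' : Submodule S₁ M'')
    (hstrict₁ : Fil' = Fil.comap f) (hstrict₂ : Fil.map g = Fil'')
    (s : S₁)
    (h2 : FiniteDimensional k
      ↥((Submodule.map (LinearMap.lsmul S₁ M s) ⊤).map Fil.mkQ)) :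
    -- the first induced map is injective on `s·N'/(s·N' ∩ Fil N')`
    Set.InjOn (Submodule.mapQ Fil' Fil f (le_of_eq hstrict₁))
      (((Submodule.map (LinearMap.lsmul S₁ M' s) ⊤).map Fil'.mkQ : Submodule S₁ (M' ⧸ Fil'))
        : Set (M' ⧸ Fil')) ∧
    -- the second induced map is surjective onto `s·N''/(s·N'' ∩ Fil N'')`
    ((Submodule.map (LinearMap.lsmul S₁ M'' s) ⊤).map Fil''.mkQ ≤
      ((Submodule.map (LinearMap.lsmul S₁ M s) ⊤).map Fil.mkQ).map
        (Submodule.mapQ Fil Fil'' g (Submodule.map_le_iff_le_comap.mp (le_of_eq hstrict₂)))) ∧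
    -- dimension inequality
    Module.finrank k ↥((Submodule.map (LinearMap.lsmul S₁ M' s) ⊤).map Fil'.mkQ) +
      Module.finrank k ↥((Submodule.map (LinearMap.lsmul S₁ M'' s) ⊤).map Fil''.mkQ) ≤
    Module.finrank k ↥((Submodule.map (LinearMap.lsmul S₁ M s) ⊤).map Fil.mkQ) := by
  set sM' := map (LinearMap.lsmul S₁ M' s) ⊤
  set sM := map (LinearMap.lsmul S₁ M s) ⊤
  set sM'' := map (LinearMap.lsmul S₁ M'' s) ⊤
  have hFil : Fil ≤ Fil''.comap g := map_le_iff_le_comap.mp hstrict₂.le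
  set φ := Fil'.mapQ Fil f hstrict₁.le
  set ψ := Fil.mapQ Fil'' g hFil
  have hφ : Function.Injective φ := mapQ_injective_of_eq_comap f hstrict₁
  have hψφ : ψ ∘ₗ φ = 0 := by
    ext m
    simp [φ, ψ, hfg.apply_apply_eq_zero]
  have hφ_image : (sM'.map Fil'.mkQ).map φ ≤ sM.map Fil.mkQ := by
    rw [map_mapQ_map_mkQ, map_map_lsmul_top]
    exact map_mono (map_mono le_top)
  have hψ_image : (sM.map Fil.mkQ).map ψ = sM''.map Fil''.mkQ := by
    rw [map_mapQ_map_mkQ, map_map_lsmul_top, LinearMap.range_eq_top.mpr hg]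
  refine ⟨hφ.injOn, hψ_image.ge, ?_⟩
  have : FiniteDimensional k ((sM.map Fil.mkQ).restrictScalars k) := h2
  exact finrank_add_finrank_le_of_map_le (φ.restrictScalars k) (ψ.restrictScalars k) hφ
    congr(($hψφ).restrictScalars k)
    (A' := (sM'.map Fil'.mkQ).restrictScalars k) (A := (sM.map Fil.mkQ).restrictScalars k)
    (A'' := (sM''.map Fil''.mkQ).restrictScalars k)
    (restrictScalars_mono k hφ_image)
    (restrictScalars_mono k hψ_image.ge)

/-- With a short exact sequence `0 → N' → N → N'' → 0` of `S₁`-modules strictly compatible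
with filtrations `Fil`, and `s ∈ S₁`, the natural maps
`s·N'/(s·N' ∩ Fil N') → s·N/(s·N ∩ Fil N) → s·N''/(s·N'' ∩ Fil N'')` are respectively
injective and surjective (here `s·N/(s·N ∩ Fil N)` is realized as the image of `s·N` in
`N/Fil N`); consequently, when these are finite-dimensional over a field `k`,
`dim (s·N/(s·N ∩ Fil N)) ≥ dim (s·N'/(s·N' ∩ Fil N')) + dim (s·N''/(s·N'' ∩ Fil N''))`. -/
theorem stmt15 (k S₁ : Type*) [Field k] [CommRing S₁] [Algebra k S₁]
    (M' M M'' : Type*)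
    [AddCommGroup M'] [AddCommGroup M] [AddCommGroup M'']
    [Module S₁ M'] [Module S₁ M] [Module S₁ M'']
    [Module k M'] [Module k M] [Module k M'']
    [IsScalarTower k S₁ M'] [IsScalarTower k S₁ M] [IsScalarTower k S₁ M'']
    (f : M' →ₗ[S₁] M) (g : M →ₗ[S₁] M'')
    (hf : Function.Injective f) (hg : Function.Surjective g)
    (hfg : Function.Exact f g)
    (Fil' : Submodule S₁ M') (Fil : Submodule S₁ M) (Fil'' : Submodule S₁ M'')
    (hstrict₁ : Fil' = Fil.comap f) (hstrict₂ : Fil.map g = Fil'')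
    (s : S₁)
    (h1 : FiniteDimensional k
      ↥((Submodule.map (LinearMap.lsmul S₁ M' s) ⊤).map Fil'.mkQ))
    (h2 : FiniteDimensional k
      ↥((Submodule.map (LinearMap.lsmul S₁ M s) ⊤).map Fil.mkQ))
    (h3 : FiniteDimensional k
      ↥((Submodule.map (LinearMap.lsmul S₁ M'' s) ⊤).map Fil''.mkQ)) :
    -- the first induced map is injective on `s·N'/(s·N' ∩ Fil N')`
    Set.InjOn (Submodule.mapQ Fil' Fil f (le_of_eq hstrict₁))
      (((Submodule.map (LinearMap.lsmul S₁ M' s) ⊤).map Fil'.mkQ : Submodule S₁ (M' ⧸ Fil'))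
        : Set (M' ⧸ Fil')) ∧
    -- the second induced map is surjective onto `s·N''/(s·N'' ∩ Fil N'')`
    ((Submodule.map (LinearMap.lsmul S₁ M'' s) ⊤).map Fil''.mkQ ≤
      ((Submodule.map (LinearMap.lsmul S₁ M s) ⊤).map Fil.mkQ).map
        (Submodule.mapQ Fil Fil'' g (Submodule.map_le_iff_le_comap.mp (le_of_eq hstrict₂)))) ∧
    -- dimension inequality
    Module.finrank k ↥((Submodule.map (LinearMap.lsmul S₁ M' s) ⊤).map Fil'.mkQ) +
      Module.finrank k ↥((Submodule.map (LinearMap.lsmul S₁ M'' s) ⊤).map Fil''.mkQ) ≤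
    Module.finrank k ↥((Submodule.map (LinearMap.lsmul S₁ M s) ⊤).map Fil.mkQ) :=
  stmt15_general k S₁ M' M M'' f g hg hfg Fil' Fil Fil'' hstrict₁ hstrict₂ s h2
end

section
/- Let k be a field of characteristic p, e ≥ 1 and consider S̃₁ = k[u]/(u^{ep}) with the semilinear Frobenius and assume 2e < p. Let M̃ be free of rank 2 over S̃₁ with basis (e₁, e₂), with Fil² M̃ generated by m = α u^{e+j} e₁ + e₂ and u^{2e} e₁ for units α, and φ₂ a semilinear map with φ₂(α u^{e+j} e₁ + e₂) = μ e₁, φ₂(u^{2e} e₁) = ρ e₂, where μ, ρ are units, and 0 ≤ j < e. Then the equation ρ X (−φ(α) + φ(X) u^{p((p+1)(e−j)−2e)}) = μ has a unique solution X ∈ S̃₁, and this solution is a unit (its constant coefficient equals that of −μ/(ρ φ(α))). -/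
/-- The ring `S̃₁ = k[u]/(u^N)`. -/
def TildeS (k : Type*) [CommRing k] (N : ℕ) : Type _ :=
  Polynomial k ⧸ Ideal.span {(Polynomial.X : Polynomial k) ^ N}

noncomputable instance (k : Type*) [CommRing k] (N : ℕ) : CommRing (TildeS k N) :=
  inferInstanceAs (CommRing (Polynomial k ⧸ Ideal.span {(Polynomial.X : Polynomial k) ^ N}))

/-- The image of the variable `u` in `k[u]/(u^N)`. -/
noncomputable def TildeS.u (k : Type*) [CommRing k] (N : ℕ) : TildeS k N :=
  Ideal.Quotient.mk _ Polynomial.X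

/-- The semilinear Frobenius `φ` on `k[u]/(u^N)`: the `p`-th power Frobenius on `k` and
`u ↦ u^p`. -/
noncomputable def TildeS.phi (k : Type*) [Field k] (p : ℕ) [Fact p.Prime] [CharP k p]
    (N : ℕ) : TildeS k N →+* TildeS k N :=
  Ideal.Quotient.lift _
    (Polynomial.eval₂RingHom
      ((Ideal.Quotient.mk (Ideal.span {(Polynomial.X : Polynomial k) ^ N})).comp
        ((Polynomial.C : k →+* Polynomial k).comp (frobenius k p)))
      ((TildeS.u k N) ^ p))
    (by
      intro a ha
      rw [Ideal.mem_span_singleton] at ha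
      obtain ⟨c, rfl⟩ := ha
      rw [map_mul, map_pow]
      erw [Polynomial.coe_eval₂RingHom, Polynomial.eval₂_X]
      have : ((TildeS.u k N) ^ p) ^ N = 0 := by
        have hmem : (Polynomial.X : Polynomial k) ^ (p * N) ∈
            Ideal.span {(Polynomial.X : Polynomial k) ^ N} := by
          rw [Ideal.mem_span_singleton]
          exact pow_dvd_pow _ (Nat.le_mul_of_pos_left N (Fact.out : p.Prime).pos)
        have h0 : (Ideal.Quotient.mk (Ideal.span {(Polynomial.X : Polynomial k) ^ N}))
            ((Polynomial.X : Polynomial k) ^ (p * N)) = 0 :=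
          Ideal.Quotient.eq_zero_iff_mem.mpr hmem
        rw [map_pow] at h0
        rw [← pow_mul, TildeS.u]
        exact h0
      rw [this, zero_mul])

/-!
Since `I = (u)` is a nilpotent ideal of `S̃₁` stable under `φ` and `t = u^M ∈ I` (here
`M = p((p+1)(e−j)−2e) > 0`), the factor `ρ(−φ(α) + φ(X) t)` is a unit for every `X`, so the
equation says `X = F X` with `F X = μ (ρ(−φ(α) + φ(X) t))⁻¹`. If `X ≡ Y mod I^n` then
`F X ≡ F Y mod I^(n+1)`, so `F` is a contraction for the `I`-adic filtration, and since
`I^{ep} = 0` it has exactly one fixed point, reached by iterating `F`. Any solution divides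
the unit `μ`.
-/

namespace Ideal

variable {R : Type*} [CommRing R] {I : Ideal R} {N : ℕ}

theorem eq_of_sub_mem_pow (hI : I ^ N = ⊥) {x y : R} (h : x - y ∈ I ^ N) : x = y := by
  rwa [hI, mem_bot, sub_eq_zero] at h

theorem isUnit_add_of_mem (hI : I ^ N = ⊥) {a x : R} (ha : IsUnit a) (hx : x ∈ I) :
    IsUnit (a + x) :=
  IsNilpotent.isUnit_add_left_of_commute ⟨N, by simpa [hI] using pow_mem_pow hx N⟩ ha
    (Commute.all _ _)

theorem existsUnique_fixedPoint_of_nilpotent (hI : I ^ N = ⊥) (F : R → R)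
    (hF : ∀ n x y, x - y ∈ I ^ n → F x - F y ∈ I ^ (n + 1)) : ∃! x, F x = x := by
  have close_of_fixed : ∀ x y, F x = x → F y = y → ∀ n, x - y ∈ I ^ n := by
    intro x y hx hy n
    induction n with
    | zero => simp
    | succ n ih => simpa [hx, hy] using hF n x y ih
  have iterate_close : ∀ n, F^[n + 1] 0 - F^[n] 0 ∈ I ^ n := by
    intro n
    induction n with
    | zero => simp
    | succ n ih =>
      simpa only [Function.iterate_succ_apply'] using hF n _ _ ih
  have fixed : F (F^[N] 0) = F^[N] 0 := by
    rw [← Function.iterate_succ_apply' F]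
    exact eq_of_sub_mem_pow hI (iterate_close N)
  exact ⟨F^[N] 0, fixed, fun y hy => eq_of_sub_mem_pow hI (close_of_fixed y _ hy fixed N)⟩

theorem apply_mem_pow_of_map_le {φ : R →+* R} (hφ : I.map φ ≤ I) {x : R} {n : ℕ}
    (hx : x ∈ I ^ n) : φ x ∈ I ^ n :=
  pow_right_mono hφ n (Ideal.map_pow φ I n ▸ mem_map_of_mem φ hx)

theorem existsUnique_mul_neg_add_apply_mul_eq (hI : I ^ N = ⊥) {φ : R →+* R}
    (hφ : I.map φ ≤ I) {t α ρ : R} (ht : t ∈ I) (hα : IsUnit α) (hρ : IsUnit ρ) (μ : R) :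
    ∃! X, ρ * X * (-φ α + φ X * t) = μ := by
  set c : R → R := fun X => ρ * (-φ α + φ X * t)
  have hc : ∀ X, IsUnit (c X) := fun X =>
    hρ.mul (isUnit_add_of_mem hI (hα.map φ).neg (mul_mem_left _ _ ht))
  have solves_iff : ∀ X, ρ * X * (-φ α + φ X * t) = μ ↔ Ring.inverse (c X) * μ = X := by
    intro X
    rw [Ring.inverse_mul_eq_iff_eq_mul _ _ _ (hc X)]
    exact ⟨fun h => by linear_combination -h, fun h => by linear_combination -h⟩
  simp only [solves_iff]
  refine existsUnique_fixedPoint_of_nilpotent hI _ fun n x y hxy => ?_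
  have hprod : c x * c y * (Ring.inverse (c x) * μ - Ring.inverse (c y) * μ) =
      μ * ρ * (φ (y - x) * t) := by
    rw [map_sub]
    linear_combination (μ * c y) * Ring.inverse_mul_cancel _ (hc x) -
      (μ * c x) * Ring.inverse_mul_cancel _ (hc y)
  have hyx : y - x ∈ I ^ n := by simpa using neg_mem hxy
  have hrhs : μ * ρ * (φ (y - x) * t) ∈ I ^ (n + 1) :=
    mul_mem_left _ _ (pow_succ I n ▸ mul_mem_mul (apply_mem_pow_of_map_le hφ hyx) ht)
  rw [← hprod] at hrhs
  simpa only [Ring.inverse_mul_cancel_left _ _ ((hc x).mul (hc y))] using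
    mul_mem_left _ (Ring.inverse (c x * c y)) hrhs

end Ideal

namespace TildeS

theorem u_pow_eq_zero (k : Type*) [CommRing k] (N : ℕ) : u k N ^ N = 0 :=
  (map_pow (Ideal.Quotient.mk _) Polynomial.X N).symm.trans
    (Ideal.Quotient.eq_zero_iff_mem.mpr (Ideal.mem_span_singleton_self _))

theorem span_u_pow_eq_bot (k : Type*) [CommRing k] (N : ℕ) :
    Ideal.span {u k N} ^ N = ⊥ := by
  rw [Ideal.span_singleton_pow, u_pow_eq_zero, Ideal.span_singleton_eq_bot]

theorem phi_u (k : Type*) [Field k] (p : ℕ) [Fact p.Prime] [CharP k p] (N : ℕ) :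
    phi k p N (u k N) = u k N ^ p :=
  Polynomial.eval₂_X _ _

theorem map_phi_span_u_le (k : Type*) [Field k] (p : ℕ) [Fact p.Prime] [CharP k p] (N : ℕ) :
    (Ideal.span {u k N}).map (phi k p N) ≤ Ideal.span {u k N} := by
  rw [Ideal.map_span, Set.image_singleton, phi_u, Ideal.span_singleton_le_span_singleton]
  exact dvd_pow_self _ (Fact.out : p.Prime).ne_zero

end TildeS

theorem stmt16_general (k : Type*) [Field k] (p : ℕ) [Fact p.Prime] [CharP k p]
    (e j : ℕ) (hp : 2 * e < p) (hj : j < e)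
    (α μ ρ : TildeS k (e * p)) (hα : IsUnit α) (hμ : IsUnit μ) (hρ : IsUnit ρ) :
    (∃! X : TildeS k (e * p),
      ρ * X * (-(TildeS.phi k p (e * p) α) +
        (TildeS.phi k p (e * p) X) * (TildeS.u k (e * p)) ^ (p * ((p + 1) * (e - j) - 2 * e)))
        = μ) ∧
    (∀ X : TildeS k (e * p),
      ρ * X * (-(TildeS.phi k p (e * p) α) +
        (TildeS.phi k p (e * p) X) * (TildeS.u k (e * p)) ^ (p * ((p + 1) * (e - j) - 2 * e)))
        = μ → IsUnit X) := by
  have hM : 0 < p * ((p + 1) * (e - j) - 2 * e) := by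
    have : p + 1 ≤ (p + 1) * (e - j) := Nat.le_mul_of_pos_right _ (by omega)
    exact Nat.mul_pos (by omega) (by omega)
  refine ⟨Ideal.existsUnique_mul_neg_add_apply_mul_eq (TildeS.span_u_pow_eq_bot k _)
    (TildeS.map_phi_span_u_le k p _)
    (Ideal.pow_mem_of_mem _ (Ideal.mem_span_singleton_self _) _ hM) hα hρ μ, fun X hX => ?_⟩
  exact isUnit_of_mul_isUnit_right (isUnit_of_mul_isUnit_left (hX ▸ hμ))

/-- (Prop. of §4, case analysis) For `S̃₁ = k[u]/(u^{ep})` with `2e < p`, `0 ≤ j < e` and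
units `α, μ, ρ`, the equation `ρ X (−φ(α) + φ(X) u^{p((p+1)(e−j)−2e)}) = μ` has a unique
solution `X ∈ S̃₁`, and this solution is a unit. -/
theorem stmt16 (k : Type*) [Field k] (p : ℕ) [Fact p.Prime] [CharP k p]
    (e j : ℕ) (he : 1 ≤ e) (hp : 2 * e < p) (hj : j < e)
    (α μ ρ : TildeS k (e * p)) (hα : IsUnit α) (hμ : IsUnit μ) (hρ : IsUnit ρ) :
    (∃! X : TildeS k (e * p),
      ρ * X * (-(TildeS.phi k p (e * p) α) +
        (TildeS.phi k p (e * p) X) * (TildeS.u k (e * p)) ^ (p * ((p + 1) * (e - j) - 2 * e)))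
        = μ) ∧
    (∀ X : TildeS k (e * p),
      ρ * X * (-(TildeS.phi k p (e * p) α) +
        (TildeS.phi k p (e * p) X) * (TildeS.u k (e * p)) ^ (p * ((p + 1) * (e - j) - 2 * e)))
        = μ → IsUnit X) :=
  stmt16_general k p e j hp hj α μ ρ hα hμ hρ
end
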